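/- Define π_0 = 1 and π_n = 1 - (1 - π_{n-1}/2)² for n ≥ 1 (i.e., the case N = M = 2 of the recursion π_n = 1 - (1 - π_{n-1}/N)^M). Then for all n ≥ 0, 1/(1+n) ≤ π_n ≤ 4/(4+n). -/

import Mathlib

/-! The step map `x ↦ 1 - (1 - x/2)^2` is monotone on `(-∞, 2]`, so it suffices to check that it
sends `1/(1+t)` above `1/(2+t)` and `4/(4+t)` below `4/(5+t)`; both reduce to
`2 + t ≤ 4 (1 + t)` and `(3 + t)(5 + t) ≤ (4 + t)^2`. -/

namespace PiNBounds

noncomputable def step (x : ℝ) : ℝ := 1 - (1 - x / 2) ^ 2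

theorem step_monotoneOn : MonotoneOn step (Set.Iic 2) := by
  intro x _ y hy hxy
  have hy' : 0 ≤ 1 - y / 2 := by linarith [Set.mem_Iic.mp hy]
  have : (1 - y / 2) ^ 2 ≤ (1 - x / 2) ^ 2 := pow_le_pow_left₀ hy' (by linarith) 2
  unfold step
  linarith

theorem one_div_two_add_le_step {t : ℝ} (ht : 0 ≤ t) : 1 / (2 + t) ≤ step (1 / (1 + t)) := by
  unfold step
  rw [div_le_iff₀ (by positivity)]
  field_simp
  nlinarith

theorem step_le_four_div_five_add {t : ℝ} (ht : 0 ≤ t) : step (4 / (4 + t)) ≤ 4 / (5 + t) := by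
  unfold step
  rw [le_div_iff₀ (by positivity)]
  field_simp
  nlinarith

end PiNBounds

open PiNBounds in
theorem pi_n_bounds (π : ℕ → ℝ) (h0 : π 0 = 1)
    (hrec : ∀ n, π (n + 1) = 1 - (1 - π n / 2) ^ 2) :
    ∀ n : ℕ, 1 / (1 + n : ℝ) ≤ π n ∧ π n ≤ 4 / (4 + n : ℝ) := by
  intro n
  induction n with
  | zero => norm_num [h0]
  | succ n ih =>
    obtain ⟨hlow, hup⟩ := ih
    have hn : (0 : ℝ) ≤ n := n.cast_nonneg
    have hcap : 4 / (4 + n : ℝ) ≤ 2 := by rw [div_le_iff₀ (by positivity)]; linarith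
    have hπ : π n ∈ Set.Iic 2 := hup.trans hcap
    rw [show π (n + 1) = step (π n) from hrec n]
    push_cast
    constructor
    · calc 1 / (1 + (n + 1) : ℝ) = 1 / (2 + n) := by ring
        _ ≤ step (1 / (1 + n)) := one_div_two_add_le_step hn
        _ ≤ step (π n) := step_monotoneOn ((hlow.trans hup).trans hcap) hπ hlow
    · calc step (π n) ≤ step (4 / (4 + n)) := step_monotoneOn hπ hcap hup
        _ ≤ 4 / (5 + n) := step_le_four_div_five_add hn
        _ = 4 / (4 + (n + 1)) := by ring
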